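/- arXiv:0802.1347 — 7 statements merged into one kernel-verified Lean document; each statement's English description precedes it below -/
import Mathlib

section
/- Let X be a real Banach space and T : X ⇉ X* a maximal monotone operator. Then there exists a function h ∈ H(T) such that J h = h, i.e., h(x,x*) = h*(x*,x) for all (x,x*) ∈ X × X* (where the canonical injection of X into X** is used to evaluate h* at (x*,x)). -/
/- Setting: `X` is a real Banach space, `NormedSpace.Dual ℝ X` its topological dual.
A point-to-set operator `T : X ⇉ X*` is identified with its graph,
a subset of `X × NormedSpace.Dual ℝ X`.  Extended-real-valued functions
(`ℝ ∪ {+∞}`) are modelled by `EReal`. -/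

noncomputable section

variable {X : Type*} [NormedAddCommGroup X] [NormedSpace ℝ X]

/-- The duality pairing `⟨x, x*⟩ = x*(x)` of a pair `p = (x, x*)`. -/
def pairingFn (p : X × StrongDual ℝ X) : ℝ := p.2 p.1

/-- Convexity for extended-real-valued functions. -/
def EConvexOn {E : Type*} [AddCommMonoid E] [Module ℝ E] (h : E → EReal) : Prop :=
  ∀ p q : E, ∀ a b : ℝ, 0 ≤ a → 0 ≤ b → a + b = 1 →
    h (a • p + b • q) ≤ (a : EReal) * h p + (b : EReal) * h q

/-- `T` is a monotone operator: `⟨x - y, x* - y*⟩ ≥ 0` on the graph. -/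
def MonotoneOp (T : Set (X × StrongDual ℝ X)) : Prop :=
  ∀ p ∈ T, ∀ q ∈ T, 0 ≤ (p.2 - q.2) (p.1 - q.1)

/-- `T` is maximal monotone. -/
def MaximalMonotoneOp (T : Set (X × StrongDual ℝ X)) : Prop :=
  MonotoneOp T ∧
    ∀ p : X × StrongDual ℝ X, (∀ q ∈ T, 0 ≤ (p.2 - q.2) (p.1 - q.1)) → p ∈ T

/-- The transform `J h (x, x*) = sup_{(y, y*)} ⟨x, y*⟩ + ⟨y, x*⟩ - h (y, y*)`,
i.e. `J h (x, x*) = h* (x*, x)` via the canonical injection `X ↪ X**`. -/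
def JT (h : X × StrongDual ℝ X → EReal) : X × StrongDual ℝ X → EReal :=
  fun p => ⨆ q : X × StrongDual ℝ X, (((q.2 p.1 + p.2 q.1 : ℝ) : EReal) - h q)

/-- The family `H(T)` of convex lower semicontinuous functions on `X × X*`
majorizing the duality product and coinciding with it on `T`. -/
def HT (T : Set (X × StrongDual ℝ X)) : Set (X × StrongDual ℝ X → EReal) :=
  { h | EConvexOn h ∧ LowerSemicontinuous h ∧
      (∀ p : X × StrongDual ℝ X, (pairingFn p : EReal) ≤ h p) ∧
      (∀ p ∈ T, h p = (pairingFn p : EReal)) }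

/-- The subfamily `H_a(T) = { h ∈ H(T) | h ≥ J h }`. -/
def Ha (T : Set (X × StrongDual ℝ X)) : Set (X × StrongDual ℝ X → EReal) :=
  { h | h ∈ HT T ∧ JT h ≤ h }

/-- For `h ∈ H(T)`, the family `L(h) = { g ∈ H(T) | h ≥ g ≥ J g }`. -/
def Lfam (T : Set (X × StrongDual ℝ X)) (h : X × StrongDual ℝ X → EReal) :
    Set (X × StrongDual ℝ X → EReal) :=
  { g | g ∈ HT T ∧ g ≤ h ∧ JT g ≤ g }

/-- The Fenchel–Legendre conjugate `f*(x*) = sup_x ⟨x, x*⟩ - f x`. -/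
def fconj (f : X → EReal) : StrongDual ℝ X → EReal :=
  fun x' => ⨆ x : X, (((x' x : ℝ) : EReal) - f x)

/-- The `ε`-subdifferential:
`∂_ε f (x) = { x* | f y ≥ f x + ⟨y - x, x*⟩ - ε for all y }`. -/
def epsSubdiff (f : X → EReal) (ε : ℝ) (x : X) : Set (StrongDual ℝ X) :=
  { x' | ∀ y : X, f x + ((x' (y - x) - ε : ℝ) : EReal) ≤ f y }

/-- The graph of the subdifferential `∂f = ∂_0 f`. -/
def subdiffGraph (f : X → EReal) : Set (X × StrongDual ℝ X) :=
  { p | p.2 ∈ epsSubdiff f 0 p.1 }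

/-- The `ε`-enlargement `T^ε (x) = { x* | ⟨x - y, x* - y*⟩ ≥ -ε for all (y, y*) ∈ T }`. -/
def enl (T : Set (X × StrongDual ℝ X)) (ε : ℝ) (x : X) :
    Set (StrongDual ℝ X) :=
  { x' | ∀ q ∈ T, -ε ≤ (x' - q.2) (x - q.1) }

/-- The Fitzpatrick function
`φ_T (x, x*) = sup_{(y, y*) ∈ T} ⟨x, y*⟩ + ⟨y, x*⟩ - ⟨y, y*⟩`. -/
def fitz (T : Set (X × StrongDual ℝ X)) : X × StrongDual ℝ X → EReal :=
  fun p => ⨆ q ∈ T, ((q.2 p.1 + p.2 q.1 - q.2 q.1 : ℝ) : EReal)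

/-! Zorn's lemma gives a minimal element `m` of `H_a(T) = {h ∈ H(T) | J h ≤ h}`: the family
contains `J φ_T`, and a chain `c` in it is bounded below by `J (⨆ g ∈ c, J g)`. A minimal `m` is a
fixed point of `J`: if `J m < m` at `p₀`, lowering `m` to `J m` at `p₀` alone gives `v` with
`J v ≤ v`, and `J (J v)` is an element of `H_a(T)` below `m` that differs from it at `p₀`.
Membership in `H(T)` is always checked through the Fitzpatrick function `φ_T`: by maximality
`π ≤ J f` once `f ≤ π` on `T`, and by monotonicity `J f ≤ π` on `T` once `φ_T ≤ f`, where `π` is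
the duality pairing `pairingFn`. -/

theorem EReal.coe_sub_le_comm {a : ℝ} {b c : EReal} :
    (a : EReal) - b ≤ c ↔ (a : EReal) - c ≤ b := by
  induction b <;> induction c <;> simp [← EReal.coe_sub, add_comm]

theorem EConvexOn.iSup {E ι : Type*} [AddCommMonoid E] [Module ℝ E] {f : ι → E → EReal}
    (hf : ∀ i, EConvexOn (f i)) : EConvexOn fun p => ⨆ i, f i p := by
  intro p q a b ha hb hab
  refine iSup_le fun i => (hf i p q a b ha hb hab).trans ?_
  gcongr
  · exact le_iSup (f · p) i
  · exact le_iSup (f · q) i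

theorem econvexOn_coe_sub {E : Type*} [AddCommGroup E] [Module ℝ E] (L : E →ₗ[ℝ] ℝ)
    (c : EReal) : EConvexOn fun p => (L p : EReal) - c := by
  intro p q a b ha hb hab
  simp only [map_add, map_smul, smul_eq_mul]
  induction c with
  | bot =>
    simp only [EReal.coe_sub_bot, top_le_iff]
    rcases ha.lt_or_eq with ha | rfl
    · rw [EReal.coe_mul_top_of_pos ha, EReal.top_add_of_ne_bot]
      exact ne_bot_of_le_ne_bot EReal.zero_ne_bot (mul_nonneg (EReal.coe_nonneg.mpr hb) le_top)
    · simp [show b = 1 by linarith]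
  | coe c =>
    norm_cast
    exact le_of_eq (by linear_combination c * hab)
  | top => simp

theorem Continuous.ereal_coe_sub {α : Type*} [TopologicalSpace α] {f : α → ℝ}
    (hf : Continuous f) (c : EReal) : Continuous fun p => (f p : EReal) - c := by
  induction c with
  | bot => simpa using continuous_const
  | coe c =>
    simp_rw [← EReal.coe_sub]
    exact continuous_coe_real_ereal.comp (hf.sub continuous_const)
  | top => simpa using continuous_const

def couplingCLM (q : X × StrongDual ℝ X) : X × StrongDual ℝ X →L[ℝ] ℝ :=
  q.2.comp (ContinuousLinearMap.fst ℝ X (StrongDual ℝ X)) +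
    (ContinuousLinearMap.apply ℝ ℝ q.1).comp (ContinuousLinearMap.snd ℝ X (StrongDual ℝ X))

theorem le_JT (h : X × StrongDual ℝ X → EReal) (p q : X × StrongDual ℝ X) :
    ((q.2 p.1 + p.2 q.1 : ℝ) : EReal) - h q ≤ JT h p :=
  le_iSup (fun q => ((q.2 p.1 + p.2 q.1 : ℝ) : EReal) - h q) q

theorem JT_le {h : X × StrongDual ℝ X → EReal} {p : X × StrongDual ℝ X} {v : EReal}
    (hv : ∀ q, ((q.2 p.1 + p.2 q.1 : ℝ) : EReal) - h q ≤ v) : JT h p ≤ v :=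
  iSup_le hv

theorem JT_antitone : Antitone (JT (X := X)) := fun _ _ hhg p =>
  JT_le fun q => (EReal.sub_le_sub le_rfl (hhg q)).trans (le_JT _ p q)

theorem sub_JT_le (h : X × StrongDual ℝ X → EReal) (p q : X × StrongDual ℝ X) :
    ((q.2 p.1 + p.2 q.1 : ℝ) : EReal) - JT h q ≤ h p := by
  rw [EReal.coe_sub_le_comm, add_comm]
  exact le_JT h q p

theorem JT_JT_le (h : X × StrongDual ℝ X → EReal) : JT (JT h) ≤ h := fun p =>
  JT_le fun q => sub_JT_le h p q

theorem econvexOn_JT (h : X × StrongDual ℝ X → EReal) : EConvexOn (JT h) :=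
  EConvexOn.iSup fun q => econvexOn_coe_sub (couplingCLM q).toLinearMap (h q)

theorem lowerSemicontinuous_JT (h : X × StrongDual ℝ X → EReal) :
    LowerSemicontinuous (JT h) :=
  lowerSemicontinuous_iSup fun q =>
    ((couplingCLM q).continuous.ereal_coe_sub (h q)).lowerSemicontinuous

-- At the diagonal pair `(p₀, p₀)`, `J v ≤ v` reduces to `π p₀ ≤ J m p₀`.
theorem JT_update_JT_le [DecidableEq (X × StrongDual ℝ X)] {m : X × StrongDual ℝ X → EReal}
    (hJm : JT m ≤ m) {p₀ : X × StrongDual ℝ X} (hπ : (pairingFn p₀ : EReal) ≤ JT m p₀) :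
    JT (Function.update m p₀ (JT m p₀)) ≤ Function.update m p₀ (JT m p₀) := by
  set v := Function.update m p₀ (JT m p₀)
  have hJmv : JT m ≤ v := le_update_iff.mpr ⟨le_rfl, fun p _ => hJm p⟩
  refine fun p => JT_le fun q => ?_
  rcases eq_or_ne q p₀ with rfl | hq
  · rcases eq_or_ne p q with rfl | hp
    · simp only [v, Function.update_self]
      calc ((p.2 p.1 + p.2 p.1 : ℝ) : EReal) - JT m p
          ≤ ((p.2 p.1 + p.2 p.1 : ℝ) : EReal) - pairingFn p := EReal.sub_le_sub le_rfl hπ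
        _ = pairingFn p := by rw [← EReal.coe_sub]; simp [pairingFn]
        _ ≤ JT m p := hπ
    · simp only [v, Function.update_self, Function.update_of_ne hp]
      exact sub_JT_le m p q
  · simp only [v, Function.update_of_ne hq]
    exact (le_JT m p q).trans (hJmv p)

section

variable {T : Set (X × StrongDual ℝ X)}

theorem le_fitz {p q : X × StrongDual ℝ X} (hq : q ∈ T) :
    ((q.2 p.1 + p.2 q.1 - pairingFn q : ℝ) : EReal) ≤ fitz T p :=
  le_iSup₂ (f := fun q _ => ((q.2 p.1 + p.2 q.1 - q.2 q.1 : ℝ) : EReal)) q hq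

theorem fitz_le_JT {f : X × StrongDual ℝ X → EReal}
    (hf : ∀ p ∈ T, f p ≤ pairingFn p) : fitz T ≤ JT f := fun p =>
  iSup₂_le fun q hq => by
    rw [EReal.coe_sub]
    exact (EReal.sub_le_sub le_rfl (hf q hq)).trans (le_JT f p q)

theorem JT_le_pairingFn_of_fitz_le {f : X × StrongDual ℝ X → EReal} (hf : fitz T ≤ f)
    {p : X × StrongDual ℝ X} (hp : p ∈ T) : JT f p ≤ pairingFn p :=
  JT_le fun q => by
    rw [EReal.coe_sub_le_comm, ← EReal.coe_sub, add_comm]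
    exact (le_fitz hp).trans (hf q)

theorem pairingFn_sub (p q : X × StrongDual ℝ X) :
    pairingFn (p - q) = pairingFn p + pairingFn q - (q.2 p.1 + p.2 q.1) := by
  simp only [pairingFn, Prod.fst_sub, Prod.snd_sub, map_sub, sub_apply]
  ring

theorem MonotoneOp.fitz_le_pairingFn (hT : MonotoneOp T) {p : X × StrongDual ℝ X}
    (hp : p ∈ T) : fitz T p ≤ pairingFn p :=
  iSup₂_le fun q hq => by
    have : 0 ≤ pairingFn (p - q) := hT p hp q hq
    rw [pairingFn_sub] at this
    unfold pairingFn at this ⊢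
    exact EReal.coe_le_coe_iff.mpr (by linarith)

theorem MaximalMonotoneOp.pairingFn_le_fitz (hT : MaximalMonotoneOp T)
    (p : X × StrongDual ℝ X) : (pairingFn p : EReal) ≤ fitz T p := by
  by_contra! hlt
  have hp : p ∈ T := hT.2 p fun q hq => by
    have := EReal.coe_lt_coe_iff.mp ((le_fitz hq).trans_lt hlt)
    change 0 ≤ pairingFn (p - q)
    rw [pairingFn_sub]
    linarith
  have := EReal.coe_lt_coe_iff.mp ((le_fitz hp).trans_lt hlt)
  simp only [pairingFn] at this
  linarith

theorem MaximalMonotoneOp.pairingFn_le_JT (hT : MaximalMonotoneOp T)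
    {f : X × StrongDual ℝ X → EReal} (hf : ∀ p ∈ T, f p ≤ pairingFn p) (p : X × StrongDual ℝ X) :
    (pairingFn p : EReal) ≤ JT f p :=
  (hT.pairingFn_le_fitz p).trans (fitz_le_JT hf p)

theorem MaximalMonotoneOp.JT_mem_Ha (hT : MaximalMonotoneOp T)
    {f : X × StrongDual ℝ X → EReal} (hf : ∀ p ∈ T, f p ≤ pairingFn p)
    (hJf : ∀ p ∈ T, JT f p ≤ pairingFn p) (hfJ : f ≤ JT f) :
    JT f ∈ Ha T :=
  ⟨⟨econvexOn_JT f, lowerSemicontinuous_JT f, hT.pairingFn_le_JT hf,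
    fun p hp => le_antisymm (hJf p hp) (hT.pairingFn_le_JT hf p)⟩, JT_antitone hfJ⟩

theorem MaximalMonotoneOp.JT_fitz_mem_Ha (hT : MaximalMonotoneOp T) : JT (fitz T) ∈ Ha T :=
  have hfitz : ∀ p ∈ T, fitz T p ≤ pairingFn p := fun _ => hT.1.fitz_le_pairingFn
  hT.JT_mem_Ha hfitz (fun _ => JT_le_pairingFn_of_fitz_le le_rfl) (fitz_le_JT hfitz)

theorem le_pairingFn_of_le_of_mem_HT {f h : X × StrongDual ℝ X → EReal} (hh : h ∈ HT T)
    (hfh : f ≤ h) {p : X × StrongDual ℝ X} (hp : p ∈ T) : f p ≤ pairingFn p :=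
  (hfh p).trans (hh.2.2.2 p hp).le

theorem MaximalMonotoneOp.exists_lowerBound_of_isChain (hT : MaximalMonotoneOp T)
    {c : Set (X × StrongDual ℝ X → EReal)} (hcT : c ⊆ Ha T) (hc : IsChain (· ≤ ·) c)
    {y : X × StrongDual ℝ X → EReal} (hy : y ∈ c) : ∃ lb ∈ Ha T, ∀ z ∈ c, lb ≤ z := by
  set G := ⨆ g ∈ c, JT g
  have hJG : ∀ g ∈ c, JT g ≤ G := fun g hg => le_iSup₂ (f := fun g _ => JT g) g hg
  have hGz : ∀ z ∈ c, G ≤ z := fun z hz => iSup₂_le fun g hg => by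
    rcases hc.total hg hz with hgz | hzg
    · exact (hcT hg).2.trans hgz
    · exact (JT_antitone hzg).trans (hcT hz).2
  have hJGz : ∀ z ∈ c, JT G ≤ z := fun z hz => (JT_antitone (hJG z hz)).trans (JT_JT_le z)
  refine ⟨JT G, hT.JT_mem_Ha ?_ ?_ ?_, hJGz⟩
  · exact fun p => le_pairingFn_of_le_of_mem_HT (hcT hy).1 (hGz y hy)
  · exact fun p => le_pairingFn_of_le_of_mem_HT (hcT hy).1 (hJGz y hy)
  · exact iSup₂_le fun g hg => JT_antitone (hGz g hg)

theorem MaximalMonotoneOp.exists_minimal_Ha (hT : MaximalMonotoneOp T) :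
    ∃ m, Minimal (· ∈ Ha T) m := by
  obtain ⟨m, -, hm⟩ := zorn_le_nonempty₀ (α := (X × StrongDual ℝ X → EReal)ᵒᵈ) (Ha T)
    (fun c hcT hc _ hy => hT.exists_lowerBound_of_isChain hcT hc.symm hy) _ hT.JT_fitz_mem_Ha
  exact ⟨m, maximal_toDual.mp hm⟩

theorem MaximalMonotoneOp.JT_eq_of_minimal (hT : MaximalMonotoneOp T)
    {m : X × StrongDual ℝ X → EReal} (hm : Minimal (· ∈ Ha T) m) : JT m = m := by
  classical
  obtain ⟨⟨hmH, hJm⟩, hmin⟩ := hm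
  refine le_antisymm hJm fun p₀ => ?_
  by_contra! hlt
  set v := Function.update m p₀ (JT m p₀)
  have hvm : v ≤ m := update_le_iff.mpr ⟨hlt.le, fun _ _ => le_rfl⟩
  have hJv : JT v ≤ v :=
    JT_update_JT_le hJm (hT.pairingFn_le_JT (fun p hp => (hmH.2.2.2 p hp).le) p₀)
  have hvT : ∀ p ∈ T, v p ≤ pairingFn p := fun p => le_pairingFn_of_le_of_mem_HT hmH hvm
  have hJJv : JT (JT v) ∈ Ha T := hT.JT_mem_Ha (fun p hp => (hJv p).trans (hvT p hp))
    (fun p hp => (JT_JT_le v p).trans (hvT p hp)) (JT_antitone hJv)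
  have hmv : m p₀ ≤ v p₀ := (hmin hJJv ((JT_JT_le v).trans hvm) p₀).trans (JT_JT_le v p₀)
  simp only [v, Function.update_self] at hmv
  exact absurd hmv (not_le.mpr hlt)

end

theorem exists_fixed_point_representation_general
    (T : Set (X × StrongDual ℝ X)) (hT : MaximalMonotoneOp T) :
    ∃ h ∈ HT T, JT h = h := by
  obtain ⟨m, hm⟩ := hT.exists_minimal_Ha
  exact ⟨m, hm.prop.1, hT.JT_eq_of_minimal hm⟩

/-- any maximal monotone operator `T` on a real Banach space admits a
representation `h ∈ H(T)` which is a fixed point of `J`. -/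
theorem exists_fixed_point_representation [CompleteSpace X]
    (T : Set (X × StrongDual ℝ X)) (hT : MaximalMonotoneOp T) :
    ∃ h ∈ HT T, JT h = h :=
  exists_fixed_point_representation_general T hT
end
end

section
/- Let X be a real Banach space and T : X ⇉ X* a maximal monotone operator. If F is a nonempty subfamily of H(T), then the pointwise supremum sup_{h ∈ F} h belongs to H(T). Consequently, σ_T := sup_{h ∈ H(T)} h belongs to H(T) and is the largest element of H(T). -/
/- Setting: `X` is a real Banach space, `NormedSpace.Dual ℝ X` its topological dual.
A point-to-set operator `T : X ⇉ X*` is identified with its graph,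
a subset of `X × NormedSpace.Dual ℝ X`.  Extended-real-valued functions
(`ℝ ∪ {+∞}`) are modelled by `EReal`. -/

noncomputable section

variable {X : Type*} [NormedAddCommGroup X] [NormedSpace ℝ X]

theorem EConvexOn.biSup {E : Type*} [AddCommMonoid E] [Module ℝ E] {F : Set (E → EReal)}
    (hF : ∀ h ∈ F, EConvexOn h) : EConvexOn fun p => ⨆ h ∈ F, h p := by
  intro p q a b ha hb hab
  refine iSup₂_le fun h hh => ?_
  calc h (a • p + b • q) ≤ (a : EReal) * h p + (b : EReal) * h q := hF h hh p q a b ha hb hab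
    _ ≤ (a : EReal) * (⨆ h ∈ F, h p) + (b : EReal) * (⨆ h ∈ F, h q) := by
      gcongr
      · exact le_iSup₂ (f := fun h (_ : h ∈ F) => h p) h hh
      · exact le_iSup₂ (f := fun h (_ : h ∈ F) => h q) h hh

theorem biSup_mem_HT {T : Set (X × StrongDual ℝ X)} {F : Set (X × StrongDual ℝ X → EReal)}
    (hFne : F.Nonempty) (hFsub : F ⊆ HT T) : (fun p => ⨆ h ∈ F, h p) ∈ HT T := by
  obtain ⟨h₀, h₀F⟩ := hFne
  have le_sup (p : X × StrongDual ℝ X) : h₀ p ≤ ⨆ h ∈ F, h p :=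
    le_iSup₂ (f := fun h (_ : h ∈ F) => h p) h₀ h₀F
  refine ⟨EConvexOn.biSup fun h hh => (hFsub hh).1,
    lowerSemicontinuous_biSup fun h hh => (hFsub hh).2.1,
    fun p => ((hFsub h₀F).2.2.1 p).trans (le_sup p), fun p hp => ?_⟩
  refine le_antisymm (iSup₂_le fun h hh => ((hFsub hh).2.2.2 p hp).le) ?_
  exact ((hFsub h₀F).2.2.2 p hp).symm.le.trans (le_sup p)

theorem sup_mem_HT_general
    (T : Set (X × StrongDual ℝ X))
    (F : Set (X × StrongDual ℝ X → EReal)) (hFne : F.Nonempty) (hFsub : F ⊆ HT T) :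
    (fun p => ⨆ h ∈ F, h p) ∈ HT T ∧
      (fun p => ⨆ h ∈ HT T, h p) ∈ HT T ∧
      ∀ h ∈ HT T, h ≤ fun p => ⨆ g ∈ HT T, g p :=
  ⟨biSup_mem_HT hFne hFsub, biSup_mem_HT (hFne.mono hFsub) subset_rfl,
    fun h hh p => le_iSup₂ (f := fun g (_ : g ∈ HT T) => g p) h hh⟩

/-- the pointwise supremum of any nonempty subfamily of `H(T)` is in `H(T)`;
consequently `σ_T = sup_{h ∈ H(T)} h` belongs to `H(T)` and is its largest element. -/
theorem sup_mem_HT [CompleteSpace X]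
    (T : Set (X × StrongDual ℝ X)) (hT : MaximalMonotoneOp T)
    (F : Set (X × StrongDual ℝ X → EReal)) (hFne : F.Nonempty) (hFsub : F ⊆ HT T) :
    (fun p => ⨆ h ∈ F, h p) ∈ HT T ∧
      (fun p => ⨆ h ∈ HT T, h p) ∈ HT T ∧
      ∀ h ∈ HT T, h ≤ fun p => ⨆ g ∈ HT T, g p :=
  sup_mem_HT_general T F hFne hFsub
end
end

section
/- Let X be a real Banach space, T : X ⇉ X* a maximal monotone operator, and h ∈ H(T). Then for every (x,x*) ∈ X × X*, h(x,x*) = ⟨x,x*⟩ if and only if (x,x*) ∈ T. Hence every element of H(T) fully characterizes T. -/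
/- Setting: `X` is a real Banach space, `StrongDual ℝ X` its topological dual.
A point-to-set operator `T : X ⇉ X*` is identified with its graph,
a subset of `X × StrongDual ℝ X`.  Extended-real-valued functions
(`ℝ ∪ {+∞}`) are modelled by `EReal`. -/

noncomputable section

variable {X : Type*} [NormedAddCommGroup X] [NormedSpace ℝ X]

/- If `h` is convex, majorizes the duality product and agrees with it at `p` and `q`, then
at the midpoint `m` of `p` and `q` one has `⟨m⟩ ≤ h m ≤ (⟨p⟩ + ⟨q⟩) / 2`, and the gap
`(⟨p⟩ + ⟨q⟩) / 2 - ⟨m⟩` is `⟨p.1 - q.1, p.2 - q.2⟩ / 4`. So the contact set `{h = ⟨·,·⟩}` is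
monotone; it contains `T`, hence equals `T` when `T` is maximal monotone. -/

theorem pairingFn_midpoint (p q : X × StrongDual ℝ X) :
    pairingFn ((1 / 2 : ℝ) • p + (1 / 2 : ℝ) • q) =
      (pairingFn p + pairingFn q) / 2 - (p.2 - q.2) (p.1 - q.1) / 4 := by
  simp only [pairingFn, Prod.fst_add, Prod.snd_add, Prod.smul_fst, Prod.smul_snd, map_add,
    map_smul, map_sub, add_apply, sub_apply, smul_apply, smul_eq_mul]
  ring

theorem EConvexOn.midpoint_le {E : Type*} [AddCommMonoid E] [Module ℝ E] {h : E → EReal}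
    (hconv : EConvexOn h) {p q : E} {a b : ℝ} (hp : h p = a) (hq : h q = b) :
    h ((1 / 2 : ℝ) • p + (1 / 2 : ℝ) • q) ≤ ((a + b) / 2 : ℝ) := by
  have := hconv p q (1 / 2) (1 / 2) (by norm_num) (by norm_num) (by norm_num)
  rw [hp, hq, ← EReal.coe_mul, ← EReal.coe_mul, ← EReal.coe_add] at this
  exact this.trans_eq (by congr 1; ring)

theorem monotoneOp_setOf_eq_pairingFn {h : X × StrongDual ℝ X → EReal} (hconv : EConvexOn h)
    (hge : ∀ p, (pairingFn p : EReal) ≤ h p) :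
    MonotoneOp {p | h p = (pairingFn p : EReal)} := by
  intro p hp q hq
  have hmid := EReal.coe_le_coe_iff.mp ((hge _).trans (hconv.midpoint_le hp hq))
  rw [pairingFn_midpoint] at hmid
  linarith

theorem mem_T_iff_eq_pairing_general
    (T : Set (X × StrongDual ℝ X)) (hT : MaximalMonotoneOp T)
    (h : X × StrongDual ℝ X → EReal) (hh : h ∈ HT T) :
    ∀ p : X × StrongDual ℝ X, h p = (pairingFn p : EReal) ↔ p ∈ T := by
  obtain ⟨hconv, -, hge, heq⟩ := hh
  intro p
  refine ⟨fun hp => hT.2 p fun q hq => ?_, heq p⟩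
  exact monotoneOp_setOf_eq_pairingFn hconv hge p hp q (heq q hq)

/-- any `h ∈ H(T)` fully characterizes `T`:
`h (x, x*) = ⟨x, x*⟩` iff `(x, x*) ∈ T`. -/
theorem mem_T_iff_eq_pairing [CompleteSpace X]
    (T : Set (X × StrongDual ℝ X)) (hT : MaximalMonotoneOp T)
    (h : X × StrongDual ℝ X → EReal) (hh : h ∈ HT T) :
    ∀ p : X × StrongDual ℝ X, h p = (pairingFn p : EReal) ↔ p ∈ T :=
  mem_T_iff_eq_pairing_general T hT h hh
end
end

section
/- Let X be a real Banach space and f : X → ℝ ∪ {+∞} a proper, convex, lower semicontinuous function. Define h_FY : X × X* → ℝ ∪ {+∞} by h_FY(x,x*) := f(x) + f*(x*). Then J h_FY = h_FY, i.e., for all (x,x*) ∈ X × X*, sup_{(y,y*) ∈ X × X*} ( ⟨x,y*⟩ + ⟨y,x*⟩ − f(y) − f*(y*) ) = f(x) + f*(x*). -/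
/- Setting: `X` is a real Banach space, `NormedSpace.Dual ℝ X` its topological dual.
A point-to-set operator `T : X ⇉ X*` is identified with its graph,
a subset of `X × NormedSpace.Dual ℝ X`.  Extended-real-valued functions
(`ℝ ∪ {+∞}`) are modelled by `EReal`. -/

noncomputable section

variable {X : Type*} [NormedAddCommGroup X] [NormedSpace ℝ X]

/-!
Splitting the supremum defining `J h_FY (x, x*)` over the two coordinates of `(y, y*)` gives
`f*(x*) + f**(x)`, so the claim is the Fenchel–Moreau theorem `f** = f` on `X`. Its nontrivial
half `f ≤ f**` asks for an affine minorant of `f` above any point `(x₀, r)` below the graph.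
Hahn–Banach separates `(x₀, r)` from the closed convex epigraph by a functional `(ψ, c)` with
`c ≥ 0`; if `c > 0` the separating hyperplane is the graph of the minorant, and if `c = 0` one
tilts an arbitrary affine minorant (which exists by the first case at a point of the domain)
by a large multiple of `ψ`.
-/

lemma nonneg_of_forall_lt_add_mul {a c u t₀ : ℝ} (h : ∀ t, t₀ ≤ t → u < a + c * t) :
    0 ≤ c := by
  by_contra! hc
  have hle : c * max t₀ ((u - a) / c) ≤ c * ((u - a) / c) :=
    mul_le_mul_of_nonpos_left (le_max_right _ _) hc.le
  rw [mul_div_cancel₀ _ hc.ne] at hle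
  linarith [h (max t₀ ((u - a) / c)) (le_max_left _ _)]

namespace EReal

lemma coe_le_of_forall_le_coe {a : ℝ} {b : EReal} (h : ∀ t : ℝ, b ≤ t → a ≤ t) :
    (a : EReal) ≤ b :=
  le_of_forall_lt_iff_le.1 fun t ht => by exact_mod_cast h t ht.le

lemma coe_sub_le_comm_s9 {a : ℝ} {b c : EReal} : (a : EReal) - b ≤ c ↔ (a : EReal) - c ≤ b := by
  induction b <;> induction c <;> simp [← coe_sub, add_comm]

lemma iSup_prod_add {ι κ : Type*} (a : ι → EReal) (b : κ → EReal) :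
    ⨆ p : ι × κ, a p.1 + b p.2 = (⨆ i, a i) + ⨆ j, b j := by
  refine le_antisymm (iSup_le fun p => add_le_add (le_iSup a _) (le_iSup b _)) ?_
  refine add_le_of_forall_lt fun a' ha' b' hb' => ?_
  obtain ⟨i, hi⟩ := lt_iSup_iff.1 ha'
  obtain ⟨j, hj⟩ := lt_iSup_iff.1 hb'
  exact (add_le_add hi.le hj.le).trans (le_iSup (fun p : ι × κ => a p.1 + b p.2) (i, j))

end EReal

section Epigraph

variable {E : Type*} {f : E → EReal}

def realEpigraph (f : E → EReal) : Set (E × ℝ) := {p | f p.1 ≤ p.2}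

lemma isClosed_realEpigraph [TopologicalSpace E] (hf : LowerSemicontinuous f) :
    IsClosed (realEpigraph f) :=
  hf.isClosed_epigraph.preimage
    (continuous_fst.prodMk (continuous_coe_real_ereal.comp continuous_snd))

lemma convex_realEpigraph [AddCommMonoid E] [Module ℝ E] (hf : EConvexOn f) :
    Convex ℝ (realEpigraph f) := by
  rintro ⟨y₁, t₁⟩ h₁ ⟨y₂, t₂⟩ h₂ a b ha hb hab
  calc f (a • y₁ + b • y₂) ≤ (a : EReal) * f y₁ + (b : EReal) * f y₂ := hf _ _ a b ha hb hab
    _ ≤ (a : EReal) * t₁ + (b : EReal) * t₂ := by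
      gcongr <;> first | exact EReal.coe_nonneg.2 ‹_› | assumption
    _ = ((a * t₁ + b * t₂ : ℝ) : EReal) := by norm_cast

variable [AddCommGroup E] [Module ℝ E] [TopologicalSpace E]

lemma map_prod_eq_comp_inl_add_mul (φ : StrongDual ℝ (E × ℝ)) (y : E) (t : ℝ) :
    φ (y, t) = φ.comp (.inl ℝ E ℝ) y + φ (0, 1) * t := by
  calc φ (y, t) = φ ((y, 0) + t • (0, 1)) := by simp
    _ = φ.comp (.inl ℝ E ℝ) y + φ (0, 1) * t := by
      rw [map_add, map_smul, smul_eq_mul, mul_comm]; rfl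

lemma exists_affine_minorant_of_separation {ψ : StrongDual ℝ E} {c u : ℝ} (hc : 0 < c)
    {x₀ : E} {r : ℝ} (hx₀ : ψ x₀ + c * r < u) (hsep : ∀ y (t : ℝ), f y ≤ t → u < ψ y + c * t) :
    ∃ (x' : StrongDual ℝ E) (a : ℝ), (∀ y, ((x' y - a : ℝ) : EReal) ≤ f y) ∧ r ≤ x' x₀ - a := by
  have hval : ∀ y, (-c⁻¹ • ψ) y - -(u / c) = (u - ψ y) / c := fun y => by
    rw [smul_apply, smul_eq_mul]; ring
  refine ⟨-c⁻¹ • ψ, -(u / c), fun y => EReal.coe_le_of_forall_le_coe fun t ht => ?_, ?_⟩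
  · rw [hval, div_le_iff₀ hc]
    linarith [hsep y t ht]
  · rw [hval, le_div_iff₀ hc]
    linarith

variable [IsTopologicalAddGroup E] [ContinuousSMul ℝ E] [LocallyConvexSpace ℝ E]

lemma exists_separation_of_lt (hconv : EConvexOn f) (hlsc : LowerSemicontinuous f) {x₀ : E}
    {r : ℝ} (hr : (r : EReal) < f x₀) :
    ∃ (ψ : StrongDual ℝ E) (c u : ℝ), ψ x₀ + c * r < u ∧
      ∀ y (t : ℝ), f y ≤ t → u < ψ y + c * t := by
  obtain ⟨φ, u, hx₀, hepi⟩ := geometric_hahn_banach_point_closed (convex_realEpigraph hconv)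
    (isClosed_realEpigraph hlsc) (x := (x₀, r)) hr.not_ge
  refine ⟨φ.comp (.inl ℝ E ℝ), φ (0, 1), u, ?_, fun y t hyt => ?_⟩
  · rwa [← map_prod_eq_comp_inl_add_mul]
  · rw [← map_prod_eq_comp_inl_add_mul]
    exact hepi (y, t) hyt

lemma exists_affine_minorant (hconv : EConvexOn f) (hlsc : LowerSemicontinuous f)
    (hproper : ∃ x, f x ≠ ⊤) (hnbot : ∀ x, f x ≠ ⊥) :
    ∃ (x' : StrongDual ℝ E) (a : ℝ), ∀ y, ((x' y - a : ℝ) : EReal) ≤ f y := by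
  obtain ⟨x, hx⟩ := hproper
  have hlt : (((f x).toReal - 1 : ℝ) : EReal) < f x := by
    rw [← EReal.coe_toReal hx (hnbot x)]
    exact_mod_cast sub_one_lt _
  obtain ⟨ψ, c, u, hx_lt, hsep⟩ := exists_separation_of_lt hconv hlsc hlt
  have hc : 0 < c := by
    have := hsep x _ (EReal.le_coe_toReal hx)
    linarith
  obtain ⟨x', a, hmin, -⟩ := exists_affine_minorant_of_separation hc hx_lt hsep
  exact ⟨x', a, hmin⟩

lemma exists_affine_minorant_ge (hconv : EConvexOn f) (hlsc : LowerSemicontinuous f)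
    (hproper : ∃ x, f x ≠ ⊤) (hnbot : ∀ x, f x ≠ ⊥) {x₀ : E} {r : ℝ}
    (hr : (r : EReal) < f x₀) :
    ∃ (x' : StrongDual ℝ E) (a : ℝ), (∀ y, ((x' y - a : ℝ) : EReal) ≤ f y) ∧ r ≤ x' x₀ - a := by
  obtain ⟨ψ, c, u, hx₀, hsep⟩ := exists_separation_of_lt hconv hlsc hr
  obtain ⟨x, hx⟩ := hproper
  have hc : 0 ≤ c := nonneg_of_forall_lt_add_mul (t₀ := (f x).toReal) fun t ht =>
    hsep x t ((EReal.le_coe_toReal hx).trans (by exact_mod_cast ht))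
  rcases hc.lt_or_eq with hc | rfl
  · exact exists_affine_minorant_of_separation hc hx₀ hsep
  -- The separating hyperplane is vertical: tilt some affine minorant along it.
  obtain ⟨x'₀, a₀, hmin⟩ := exists_affine_minorant hconv hlsc ⟨x, hx⟩ hnbot
  simp only [zero_mul, add_zero] at hx₀ hsep
  have hd : 0 < u - ψ x₀ := by linarith
  set s := max 0 ((r - (x'₀ x₀ - a₀)) / (u - ψ x₀))
  have hs : 0 ≤ s := le_max_left _ _
  refine ⟨x'₀ - s • ψ, a₀ - s * u, fun y => EReal.coe_le_of_forall_le_coe fun t ht => ?_, ?_⟩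
  · have h₁ : x'₀ y - a₀ ≤ t := by exact_mod_cast (hmin y).trans ht
    have h₂ : s * u ≤ s * ψ y := mul_le_mul_of_nonneg_left (hsep y t ht).le hs
    simp only [sub_apply, smul_apply, smul_eq_mul]
    linarith
  · have h : r - (x'₀ x₀ - a₀) ≤ s * (u - ψ x₀) := (div_le_iff₀ hd).1 (le_max_right _ _)
    simp only [sub_apply, smul_apply, smul_eq_mul]
    linarith

end Epigraph

section Conjugate

variable {f : X → EReal}

lemma fconj_le_coe_iff {x' : StrongDual ℝ X} {a : ℝ} :
    fconj f x' ≤ a ↔ ∀ y, ((x' y - a : ℝ) : EReal) ≤ f y := by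
  simp only [fconj, iSup_le_iff, EReal.coe_sub, EReal.coe_sub_le_comm_s9]

lemma fconj_ne_bot (hf : ∃ x, f x ≠ ⊤) (x' : StrongDual ℝ X) : fconj f x' ≠ ⊥ := by
  obtain ⟨x, hx⟩ := hf
  refine ne_bot_of_le_ne_bot ?_ (le_iSup (fun y => ((x' y : ℝ) : EReal) - f y) x)
  simpa [sub_eq_add_neg] using hx

/-- The biconjugate `f**`, restricted to `X ⊆ X**`. -/
def fbiconj (f : X → EReal) : X → EReal :=
  fun x => ⨆ x' : StrongDual ℝ X, ((x' x : ℝ) : EReal) - fconj f x'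

lemma fbiconj_le (f : X → EReal) : fbiconj f ≤ f := fun x =>
  iSup_le fun x' => EReal.coe_sub_le_comm_s9.1 (le_iSup (fun y => ((x' y : ℝ) : EReal) - f y) x)

theorem fbiconj_eq (hconv : EConvexOn f) (hlsc : LowerSemicontinuous f)
    (hproper : ∃ x, f x ≠ ⊤) (hnbot : ∀ x, f x ≠ ⊥) : fbiconj f = f := by
  refine le_antisymm (fbiconj_le f) fun x => EReal.ge_of_forall_gt_iff_ge.1 fun r hr => ?_
  obtain ⟨x', a, hmin, hra⟩ := exists_affine_minorant_ge hconv hlsc hproper hnbot hr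
  calc (r : EReal) ≤ ((x' x - a : ℝ) : EReal) := by exact_mod_cast hra
    _ ≤ ((x' x : ℝ) : EReal) - fconj f x' := by
      rw [EReal.coe_sub]
      exact EReal.sub_le_sub le_rfl (fconj_le_coe_iff.2 hmin)
    _ ≤ fbiconj f x := le_iSup (fun x' : StrongDual ℝ X => ((x' x : ℝ) : EReal) - fconj f x') x'

lemma JT_fenchelYoung_apply (hnbot : ∀ x, f x ≠ ⊥) (hconj : ∀ x', fconj f x' ≠ ⊥)
    (p : X × StrongDual ℝ X) :
    JT (fun p => f p.1 + fconj f p.2) p = fconj f p.2 + fbiconj f p.1 := by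
  have hsplit : ∀ q : X × StrongDual ℝ X,
      ((q.2 p.1 + p.2 q.1 : ℝ) : EReal) - (f q.1 + fconj f q.2) =
        (((p.2 q.1 : ℝ) : EReal) - f q.1) + (((q.2 p.1 : ℝ) : EReal) - fconj f q.2) := fun q => by
    rw [add_comm (q.2 p.1), EReal.coe_add,
      EReal.add_sub_add_comm (.inl (hnbot _)) (.inr (hconj _))]
  simp only [JT, hsplit]
  exact EReal.iSup_prod_add (fun y => ((p.2 y : ℝ) : EReal) - f y)
    (fun y' => ((y' p.1 : ℝ) : EReal) - fconj f y')

end Conjugate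

theorem JT_fenchelYoung_eq_general
    (f : X → EReal) (hconv : EConvexOn f) (hlsc : LowerSemicontinuous f)
    (hproper : ∃ x, f x ≠ ⊤) (hnbot : ∀ x, f x ≠ ⊥) :
    JT (fun p => f p.1 + fconj f p.2) = fun p => f p.1 + fconj f p.2 := by
  funext p
  rw [JT_fenchelYoung_apply hnbot (fconj_ne_bot hproper), fbiconj_eq hconv hlsc hproper hnbot,
    add_comm]

/-- for `f` proper convex lsc, `h_FY (x, x*) = f x + f* x*` is a fixed point
of `J`. -/
theorem JT_fenchelYoung_eq [CompleteSpace X]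
    (f : X → EReal) (hconv : EConvexOn f) (hlsc : LowerSemicontinuous f)
    (hproper : ∃ x, f x ≠ ⊤) (hnbot : ∀ x, f x ≠ ⊥) :
    JT (fun p => f p.1 + fconj f p.2) = fun p => f p.1 + fconj f p.2 :=
  JT_fenchelYoung_eq_general f hconv hlsc hproper hnbot
end
end

section
/- Let X be a real Banach space and f : X → ℝ ∪ {+∞} a proper convex function (transportation formula). Suppose ε₁, ε₂ ≥ 0, x₁* ∈ ∂_{ε₁} f(x₁), x₂* ∈ ∂_{ε₂} f(x₂), and p, q ≥ 0 with p + q = 1. Define x̄ := p x₁ + q x₂, x̄* := p x₁* + q x₂*, and ε̄ := p ε₁ + q ε₂ + p q ⟨x₁ − x₂, x₁* − x₂*⟩. Then ε̄ ≥ 0 and x̄* ∈ ∂_{ε̄} f(x̄). -/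
/- Setting: `X` is a real Banach space, `StrongDual ℝ X` its topological dual.
A point-to-set operator `T : X ⇉ X*` is identified with its graph,
a subset of `X × StrongDual ℝ X`.  Extended-real-valued functions
(`ℝ ∪ {+∞}`) are modelled by `EReal`. -/

noncomputable section

variable {X : Type*} [NormedAddCommGroup X] [NormedSpace ℝ X]

/-! Averaging the affine minorants `y ↦ f xᵢ + ⟨y - xᵢ, xᵢ*⟩ - εᵢ` of `f` with weights `p, q`
gives the affine minorant `y ↦ p f x₁ + q f x₂ + ⟨y - x̄, x̄*⟩ - ε̄`, the term `p q ⟨x₁ - x₂, x₁* - x₂*⟩`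
coming from recentring both minorants at `x̄`; convexity gives `f x̄ ≤ p f x₁ + q f x₂`.
Finally `ε̄ ≥ 0` because `∂_ε̄ f (x̄)` is nonempty and `f x̄` is finite. -/

section EpsSubdiff

variable {f : X → EReal} {ε a : ℝ} {x : X} {x' : StrongDual ℝ X}

theorem le_of_mem_epsSubdiff (hx : f x = a) (h : x' ∈ epsSubdiff f ε x) {y : X} {b : ℝ}
    (hy : f y = b) : a + x' (y - x) - ε ≤ b := by
  have := h y
  rw [hx, hy, ← EReal.coe_add] at this
  linarith [EReal.coe_le_coe_iff.mp this]

theorem mem_epsSubdiff_of_le (hbot : ∀ y, f y ≠ ⊥) (hx : f x = a)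
    (h : ∀ (y : X) (b : ℝ), f y = b → a + x' (y - x) - ε ≤ b) : x' ∈ epsSubdiff f ε x := by
  intro y
  induction hy : f y using EReal.rec with
  | bot => exact absurd hy (hbot y)
  | top => exact le_top
  | coe b =>
    rw [hx, ← EReal.coe_add, EReal.coe_le_coe_iff]
    linarith [h y b hy]

theorem ne_top_of_mem_epsSubdiff (h : x' ∈ epsSubdiff f ε x) {y : X} (hy : f y ≠ ⊤) :
    f x ≠ ⊤ := by
  intro htop
  have := h y
  rw [htop, EReal.top_add_coe, top_le_iff] at this
  exact hy this

theorem nonneg_of_mem_epsSubdiff (hx : f x = a) (h : x' ∈ epsSubdiff f ε x) : 0 ≤ ε := by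
  have := le_of_mem_epsSubdiff hx h hx
  rw [sub_self, map_zero] at this
  linarith

end EpsSubdiff

theorem EConvexOn.le_coe_of_eq_coe {E : Type*} [AddCommMonoid E] [Module ℝ E] {f : E → EReal}
    (hf : EConvexOn f) {x₁ x₂ : E} {a₁ a₂ p q : ℝ} (hp : 0 ≤ p) (hq : 0 ≤ q) (hpq : p + q = 1)
    (h₁ : f x₁ = a₁) (h₂ : f x₂ = a₂) : f (p • x₁ + q • x₂) ≤ ((p * a₁ + q * a₂ : ℝ) : EReal) := by
  have := hf x₁ x₂ p q hp hq hpq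
  rwa [h₁, h₂, ← EReal.coe_mul, ← EReal.coe_mul, ← EReal.coe_add] at this

theorem combo_apply_sub_combo (ℓ₁ ℓ₂ : StrongDual ℝ X) (x₁ x₂ y : X) {p q : ℝ}
    (hpq : p + q = 1) :
    (p • ℓ₁ + q • ℓ₂) (y - (p • x₁ + q • x₂)) =
      p * ℓ₁ (y - x₁) + q * ℓ₂ (y - x₂) + p * q * ((ℓ₁ - ℓ₂) (x₁ - x₂)) := by
  obtain rfl : q = 1 - p := by linarith
  simp only [add_apply, smul_apply, sub_apply, map_sub, map_add, map_smul, smul_eq_mul]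
  ring

theorem combo_mem_epsSubdiff {f : X → EReal} (hconv : EConvexOn f) (hbot : ∀ x, f x ≠ ⊥)
    {ε₁ ε₂ a₁ a₂ p q : ℝ} {x₁ x₂ : X} {x₁' x₂' : StrongDual ℝ X}
    (hf₁ : f x₁ = a₁) (hf₂ : f x₂ = a₂)
    (h₁ : x₁' ∈ epsSubdiff f ε₁ x₁) (h₂ : x₂' ∈ epsSubdiff f ε₂ x₂)
    (hp : 0 ≤ p) (hq : 0 ≤ q) (hpq : p + q = 1) :
    p • x₁' + q • x₂' ∈
      epsSubdiff f (p * ε₁ + q * ε₂ + p * q * ((x₁' - x₂') (x₁ - x₂))) (p • x₁ + q • x₂) := by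
  have hle := hconv.le_coe_of_eq_coe hp hq hpq hf₁ hf₂
  have hfin : f (p • x₁ + q • x₂) = ((f (p • x₁ + q • x₂)).toReal : EReal) :=
    (EReal.coe_toReal (hle.trans_lt (EReal.coe_lt_top _)).ne (hbot _)).symm
  have hc := EReal.coe_le_coe_iff.mp (hfin ▸ hle)
  refine mem_epsSubdiff_of_le hbot hfin fun y b hy => ?_
  have hb₁ := le_of_mem_epsSubdiff hf₁ h₁ hy
  have hb₂ := le_of_mem_epsSubdiff hf₂ h₂ hy
  have hb : p * b + q * b = b := by rw [← add_mul, hpq, one_mul]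
  rw [combo_apply_sub_combo x₁' x₂' x₁ x₂ y hpq]
  linarith [mul_le_mul_of_nonneg_left hb₁ hp, mul_le_mul_of_nonneg_left hb₂ hq]

theorem transportation_formula_general
    (f : X → EReal) (hconv : EConvexOn f) (hproper : ∃ x, f x ≠ ⊤) (hnbot : ∀ x, f x ≠ ⊥)
    (ε₁ ε₂ : ℝ)
    (x₁ x₂ : X) (x₁' x₂' : StrongDual ℝ X)
    (h₁ : x₁' ∈ epsSubdiff f ε₁ x₁) (h₂ : x₂' ∈ epsSubdiff f ε₂ x₂)
    (p q : ℝ) (hp : 0 ≤ p) (hq : 0 ≤ q) (hpq : p + q = 1) :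
    0 ≤ p * ε₁ + q * ε₂ + p * q * ((x₁' - x₂') (x₁ - x₂)) ∧
      p • x₁' + q • x₂' ∈
        epsSubdiff f (p * ε₁ + q * ε₂ + p * q * ((x₁' - x₂') (x₁ - x₂)))
          (p • x₁ + q • x₂) := by
  obtain ⟨x₀, hx₀⟩ := hproper
  have eq_coe : ∀ x, f x ≠ ⊤ → f x = ((f x).toReal : EReal) :=
    fun x hx => (EReal.coe_toReal hx (hnbot x)).symm
  have hf₁ := eq_coe x₁ (ne_top_of_mem_epsSubdiff h₁ hx₀)
  have hf₂ := eq_coe x₂ (ne_top_of_mem_epsSubdiff h₂ hx₀)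
  have hmem := combo_mem_epsSubdiff hconv hnbot hf₁ hf₂ h₁ h₂ hp hq hpq
  have hfin := eq_coe _
    ((hconv.le_coe_of_eq_coe hp hq hpq hf₁ hf₂).trans_lt (EReal.coe_lt_top _)).ne
  exact ⟨nonneg_of_mem_epsSubdiff hfin hmem, hmem⟩

/-- transportation formula: for `f` proper convex, `xᵢ* ∈ ∂_{εᵢ} f (xᵢ)`,
`p, q ≥ 0`, `p + q = 1`, the convex combination `(x̄, x̄*)` lies in `∂_ε̄ f` with
`ε̄ = p ε₁ + q ε₂ + p q ⟨x₁ - x₂, x₁* - x₂*⟩ ≥ 0`. -/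
theorem transportation_formula [CompleteSpace X]
    (f : X → EReal) (hconv : EConvexOn f) (hproper : ∃ x, f x ≠ ⊤) (hnbot : ∀ x, f x ≠ ⊥)
    (ε₁ ε₂ : ℝ) (hε₁ : 0 ≤ ε₁) (hε₂ : 0 ≤ ε₂)
    (x₁ x₂ : X) (x₁' x₂' : StrongDual ℝ X)
    (h₁ : x₁' ∈ epsSubdiff f ε₁ x₁) (h₂ : x₂' ∈ epsSubdiff f ε₂ x₂)
    (p q : ℝ) (hp : 0 ≤ p) (hq : 0 ≤ q) (hpq : p + q = 1) :
    0 ≤ p * ε₁ + q * ε₂ + p * q * ((x₁' - x₂') (x₁ - x₂)) ∧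
      p • x₁' + q • x₂' ∈
        epsSubdiff f (p * ε₁ + q * ε₂ + p * q * ((x₁' - x₂') (x₁ - x₂)))
          (p • x₁ + q • x₂) :=
  transportation_formula_general f hconv hproper hnbot ε₁ ε₂ x₁ x₂ x₁' x₂' h₁ h₂ p q hp hq hpq
end
end

section
/- Let X be a real Banach space and T : X ⇉ X* a maximal monotone operator. If ε₁, ε₂ ≥ 0, x₁* ∈ T^{ε₁}(x₁), and x₂* ∈ T^{ε₂}(x₂), then ⟨x₁ − x₂, x₁* − x₂*⟩ ≥ −(√ε₁ + √ε₂)². -/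
/- Setting: `X` is a real Banach space, `NormedSpace.Dual ℝ X` its topological dual.
A point-to-set operator `T : X ⇉ X*` is identified with its graph,
a subset of `X × NormedSpace.Dual ℝ X`.  Extended-real-valued functions
(`ℝ ∪ {+∞}`) are modelled by `EReal`. -/

noncomputable section

variable {X : Type*} [NormedAddCommGroup X] [NormedSpace ℝ X]

/-! If the bound failed, some convex combination `t (x₁, x₁*) + (1 - t) (x₂, x₂*)` would be
monotonically related to every point of `T` — the duality pairing is a quadratic form on
`X × X*`, so its value on a convex combination is the convex combination of its values minus
`t (1 - t) ⟨x₁ - x₂, x₁* - x₂*⟩` — and hence, by maximality, would lie in `T`. Testing the two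
enlargement inequalities against this point of `T` gives `(1 - t) √u ≤ √ε₁` and `t √u ≤ √ε₂`
for `u = -⟨x₁ - x₂, x₁* - x₂*⟩`, and adding them contradicts the assumption. -/

namespace Enlargement

theorem mem_enl_iff {T : Set (X × StrongDual ℝ X)} {ε : ℝ} {p : X × StrongDual ℝ X} :
    p.2 ∈ enl T ε p.1 ↔ ∀ q ∈ T, -ε ≤ pairingFn (p - q) :=
  Iff.rfl

theorem pairingFn_convexComb_sub (p q r : X × StrongDual ℝ X) (t : ℝ) :
    pairingFn (t • p + (1 - t) • q - r) =
      t * pairingFn (p - r) + (1 - t) * pairingFn (q - r) - t * (1 - t) * pairingFn (p - q) := by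
  simp only [pairingFn, Prod.fst_sub, Prod.snd_sub, Prod.fst_add, Prod.snd_add, Prod.smul_fst,
    Prod.smul_snd, sub_apply, add_apply, smul_apply, map_sub, map_add, map_smul, smul_eq_mul]
  ring

theorem pairingFn_sub_convexComb_left (p q : X × StrongDual ℝ X) (t : ℝ) :
    pairingFn (p - (t • p + (1 - t) • q)) = (1 - t) ^ 2 * pairingFn (p - q) := by
  simp only [pairingFn, Prod.fst_sub, Prod.snd_sub, Prod.fst_add, Prod.snd_add, Prod.smul_fst,
    Prod.smul_snd, sub_apply, add_apply, smul_apply, map_sub, map_add, map_smul, smul_eq_mul]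
  ring

theorem pairingFn_sub_convexComb_right (p q : X × StrongDual ℝ X) (t : ℝ) :
    pairingFn (q - (t • p + (1 - t) • q)) = t ^ 2 * pairingFn (p - q) := by
  simp only [pairingFn, Prod.fst_sub, Prod.snd_sub, Prod.fst_add, Prod.snd_add, Prod.smul_fst,
    Prod.smul_snd, sub_apply, add_apply, smul_apply, map_sub, map_add, map_smul, smul_eq_mul]
  ring

theorem convexComb_mem_of_mem_enl {T : Set (X × StrongDual ℝ X)} (hT : MaximalMonotoneOp T)
    {ε₁ ε₂ t : ℝ} {p₁ p₂ : X × StrongDual ℝ X}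
    (h₁ : p₁.2 ∈ enl T ε₁ p₁.1) (h₂ : p₂.2 ∈ enl T ε₂ p₂.1) (ht₀ : 0 ≤ t) (ht₁ : t ≤ 1)
    (hε : t * ε₁ + (1 - t) * ε₂ ≤ -(t * (1 - t) * pairingFn (p₁ - p₂))) :
    t • p₁ + (1 - t) • p₂ ∈ T := by
  refine hT.2 _ fun q hq => ?_
  have hq₁ : t * -ε₁ ≤ t * pairingFn (p₁ - q) := mul_le_mul_of_nonneg_left (h₁ q hq) ht₀
  have hq₂ : (1 - t) * -ε₂ ≤ (1 - t) * pairingFn (p₂ - q) :=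
    mul_le_mul_of_nonneg_left (h₂ q hq) (sub_nonneg.2 ht₁)
  change 0 ≤ pairingFn (t • p₁ + (1 - t) • p₂ - q)
  rw [pairingFn_convexComb_sub]
  linarith

theorem exists_weight_le_mul_sq_sqrt_add (ε₁ ε₂ : ℝ) :
    ∃ t, 0 ≤ t ∧ t ≤ 1 ∧ t * ε₁ + (1 - t) * ε₂ ≤ t * (1 - t) * (√ε₁ + √ε₂) ^ 2 := by
  set a := √ε₁
  set b := √ε₂
  have ha : 0 ≤ a := Real.sqrt_nonneg _
  have hb : 0 ≤ b := Real.sqrt_nonneg _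
  have hε₁ : ε₁ ≤ a ^ 2 := by rw [Real.sq_sqrt']; exact le_max_left _ _
  have hε₂ : ε₂ ≤ b ^ 2 := by rw [Real.sq_sqrt']; exact le_max_left _ _
  -- The weight with `t a = (1 - t) b`, which makes the square below vanish.
  set t := b / (a + b)
  have ht₀ : 0 ≤ t := div_nonneg hb (add_nonneg ha hb)
  have ht₁ : 0 ≤ 1 - t :=
    sub_nonneg.2 (div_le_one_of_le₀ (le_add_of_nonneg_left ha) (add_nonneg ha hb))
  have hbal : t * (a + b) = b := div_mul_cancel_of_imp fun h => by linarith
  refine ⟨t, ht₀, sub_nonneg.1 ht₁, ?_⟩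
  calc t * ε₁ + (1 - t) * ε₂ ≤ t * a ^ 2 + (1 - t) * b ^ 2 := by gcongr
    _ = t * (1 - t) * (a + b) ^ 2 + (t * (a + b) - b) ^ 2 := by ring
    _ = t * (1 - t) * (a + b) ^ 2 := by rw [hbal, sub_self]; ring

theorem le_sq_sqrt_add_of_weighted_le {t u a b : ℝ} (ht₀ : 0 ≤ t) (ht₁ : t ≤ 1)
    (ha : (1 - t) ^ 2 * u ≤ a) (hb : t ^ 2 * u ≤ b) : u ≤ (√a + √b) ^ 2 := by
  refine (Real.sqrt_le_left (by positivity)).1 ?_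
  have hsqrt (s : ℝ) (hs : 0 ≤ s) : √(s ^ 2 * u) = s * √u := by
    rw [Real.sqrt_mul (sq_nonneg s), Real.sqrt_sq hs]
  calc √u = √((1 - t) ^ 2 * u) + √(t ^ 2 * u) := by
        rw [hsqrt _ (sub_nonneg.2 ht₁), hsqrt _ ht₀]; ring
    _ ≤ √a + √b := add_le_add (Real.sqrt_le_sqrt ha) (Real.sqrt_le_sqrt hb)

end Enlargement

open Enlargement in
theorem enlargement_weak_additivity_general
    (T : Set (X × StrongDual ℝ X)) (hT : MaximalMonotoneOp T)
    (ε₁ ε₂ : ℝ)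
    (x₁ x₂ : X) (x₁' x₂' : StrongDual ℝ X)
    (h₁ : x₁' ∈ enl T ε₁ x₁) (h₂ : x₂' ∈ enl T ε₂ x₂) :
    -((Real.sqrt ε₁ + Real.sqrt ε₂) ^ 2) ≤ (x₁' - x₂') (x₁ - x₂) := by
  set p₁ : X × StrongDual ℝ X := (x₁, x₁')
  set p₂ : X × StrongDual ℝ X := (x₂, x₂')
  change -((√ε₁ + √ε₂) ^ 2) ≤ pairingFn (p₁ - p₂)
  by_contra! hlt
  obtain ⟨t, ht₀, ht₁, ht⟩ := exists_weight_le_mul_sq_sqrt_add ε₁ ε₂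
  have hε : t * ε₁ + (1 - t) * ε₂ ≤ -(t * (1 - t) * pairingFn (p₁ - p₂)) := by
    have : 0 ≤ t * (1 - t) := mul_nonneg ht₀ (sub_nonneg.2 ht₁)
    nlinarith
  have hmem := convexComb_mem_of_mem_enl hT h₁ h₂ ht₀ ht₁ hε
  have hle₁ := (mem_enl_iff (p := p₁)).1 h₁ _ hmem
  have hle₂ := (mem_enl_iff (p := p₂)).1 h₂ _ hmem
  rw [pairingFn_sub_convexComb_left] at hle₁
  rw [pairingFn_sub_convexComb_right] at hle₂
  have := le_sq_sqrt_add_of_weighted_le (u := -pairingFn (p₁ - p₂)) (a := ε₁) (b := ε₂) ht₀ ht₁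
    (by linarith) (by linarith)
  linarith

/-- the weak additivity of the enlargement `T^ε`:
`x₁* ∈ T^{ε₁}(x₁)`, `x₂* ∈ T^{ε₂}(x₂)` imply
`⟨x₁ - x₂, x₁* - x₂*⟩ ≥ -(√ε₁ + √ε₂)²`. -/
theorem enlargement_weak_additivity [CompleteSpace X]
    (T : Set (X × StrongDual ℝ X)) (hT : MaximalMonotoneOp T)
    (ε₁ ε₂ : ℝ) (hε₁ : 0 ≤ ε₁) (hε₂ : 0 ≤ ε₂)
    (x₁ x₂ : X) (x₁' x₂' : StrongDual ℝ X)
    (h₁ : x₁' ∈ enl T ε₁ x₁) (h₂ : x₂' ∈ enl T ε₂ x₂) :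
    -((Real.sqrt ε₁ + Real.sqrt ε₂) ^ 2) ≤ (x₁' - x₂') (x₁ - x₂) :=
  enlargement_weak_additivity_general T hT ε₁ ε₂ x₁ x₂ x₁' x₂' h₁ h₂
end
end

section
/- Let X be a real Banach space, T : X ⇉ X* a maximal monotone operator, and h ∈ H(T). Then L(h) is nonempty if and only if h ≥ J h pointwise (i.e., h ∈ H_a(T)). Moreover, L(σ_T) = H_a(T), where σ_T := sup_{h ∈ H(T)} h. -/
/- Setting: `X` is a real Banach space, `NormedSpace.Dual ℝ X` its topological dual.
A point-to-set operator `T : X ⇉ X*` is identified with its graph,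
a subset of `X × NormedSpace.Dual ℝ X`.  Extended-real-valued functions
(`ℝ ∪ {+∞}`) are modelled by `EReal`. -/

noncomputable section

variable {X : Type*} [NormedAddCommGroup X] [NormedSpace ℝ X]

theorem JT_antitone_s18 : Antitone (JT : (X × StrongDual ℝ X → EReal) → _) :=
  fun _ _ hgh _ => iSup_mono fun q => EReal.sub_le_sub le_rfl (hgh q)

theorem Lfam_nonempty_iff {T : Set (X × StrongDual ℝ X)} {h : X × StrongDual ℝ X → EReal}
    (hh : h ∈ HT T) : (Lfam T h).Nonempty ↔ JT h ≤ h := by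
  refine ⟨?_, fun hJh => ⟨h, hh, le_rfl, hJh⟩⟩
  rintro ⟨g, -, hgh, hJg⟩
  calc JT h ≤ JT g := JT_antitone_s18 hgh
    _ ≤ g := hJg
    _ ≤ h := hgh

theorem Lfam_eq_Ha_of_forall_le {T : Set (X × StrongDual ℝ X)} {σ : X × StrongDual ℝ X → EReal}
    (hσ : ∀ g ∈ HT T, g ≤ σ) : Lfam T σ = Ha T := by
  ext g
  exact ⟨fun ⟨hg, _, hJg⟩ => ⟨hg, hJg⟩, fun ⟨hg, hJg⟩ => ⟨hg, hσ g hg, hJg⟩⟩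

theorem L_nonempty_iff_and_L_sigma_eq_Ha_general
    (T : Set (X × StrongDual ℝ X))
    (h : X × StrongDual ℝ X → EReal) (hh : h ∈ HT T) :
    ((Lfam T h).Nonempty ↔ JT h ≤ h) ∧
      Lfam T (fun p => ⨆ g ∈ HT T, g p) = Ha T :=
  ⟨Lfam_nonempty_iff hh, Lfam_eq_Ha_of_forall_le fun _ hg p => le_biSup (fun f => f p) hg⟩

/-- for `h ∈ H(T)`, `L(h)` is nonempty iff `h ≥ J h`; moreover
`L(σ_T) = H_a(T)` where `σ_T = sup_{h ∈ H(T)} h`. -/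
theorem L_nonempty_iff_and_L_sigma_eq_Ha [CompleteSpace X]
    (T : Set (X × StrongDual ℝ X)) (hT : MaximalMonotoneOp T)
    (h : X × StrongDual ℝ X → EReal) (hh : h ∈ HT T) :
    ((Lfam T h).Nonempty ↔ JT h ≤ h) ∧
      Lfam T (fun p => ⨆ g ∈ HT T, g p) = Ha T :=
  L_nonempty_iff_and_L_sigma_eq_Ha_general T h hh
end
end
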